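/- arXiv:2401.07140 — 2 statements merged into one kernel-verified Lean document; each statement's English description precedes it below -/
import Mathlib

section
/- Let α ∈ (0,1), let u : ℝ → ℝ be twice continuously differentiable with u, u', u'' bounded, and let x ∈ ℝ. Then (1/Γ(−1−α)) ∫_{0}^{∞} (u(x+z) − u(x) − u'(x)·z)/z^{2+α} dz = (1/Γ(1−α)) · lim_{R→∞} ∫_{0}^{R} u''(x+z)/z^{α} dz; in particular the improper integral on the right converges. -/
/-!
With `G z = u (x + z) - u x - u' x * z`, so that `G' z = u' (x + z) - u' x` and
`G'' z = u'' (x + z)`, integrate by parts twice: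
`∫₀^∞ G / z^(2+α) = (1+α)⁻¹ ∫₀^∞ G' / z^(1+α)` and
`∫₀^R G'' / z^α = G' R / R^α + α ∫₀^R G' / z^(1+α)`.
All boundary terms vanish because `G = O(z²)`, `G' = O(z)` at `0` (bounded `u''`) and
`G = O(z)`, `G' = O(1)` at `∞` (bounded `u'`). Finally `Γ(1-α) = α(1+α) Γ(-1-α)`.
-/

open MeasureTheory Set Filter Topology

lemma abs_div_rpow_le {a z C p s : ℝ} (hz : 0 < z) (h : |a| ≤ C * z ^ p) :
    |a / z ^ s| ≤ C * z ^ (p - s) := by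
  rw [abs_div, abs_of_pos (Real.rpow_pos_of_pos hz s), Real.rpow_sub hz, ← mul_div_assoc]
  gcongr

section RpowBounds

variable {f : ℝ → ℝ} {C D p q s : ℝ}

lemma continuousOn_div_rpow (hf : ContinuousOn f (Ioi 0)) :
    ContinuousOn (fun z => f z / z ^ s) (Ioi 0) :=
  hf.div (continuousOn_id.rpow_const fun _ hz => Or.inl (ne_of_gt hz))
    fun _ hz => (Real.rpow_pos_of_pos hz s).ne'

lemma integrableOn_Ioc_div_rpow_of_abs_le {R : ℝ} (hf : ContinuousOn f (Ioi 0))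
    (hp : -1 < p - s) (hC : ∀ z > 0, |f z| ≤ C * z ^ p) :
    IntegrableOn (fun z => f z / z ^ s) (Ioc 0 R) := by
  refine Integrable.mono' ((intervalIntegral.intervalIntegrable_rpow' hp).1.const_mul C)
    (((continuousOn_div_rpow hf).mono Ioc_subset_Ioi_self).aestronglyMeasurable
      measurableSet_Ioc) ?_
  exact (ae_restrict_iff' measurableSet_Ioc).2
    (ae_of_all _ fun z hz => abs_div_rpow_le hz.1 (hC z hz.1))

lemma integrableOn_Ioi_div_rpow_of_abs_le (hf : ContinuousOn f (Ioi 0))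
    (hp : -1 < p - s) (hq : q - s < -1)
    (hC : ∀ z > 0, |f z| ≤ C * z ^ p) (hD : ∀ z > 0, |f z| ≤ D * z ^ q) :
    IntegrableOn (fun z => f z / z ^ s) (Ioi 0) := by
  have h1 : Ioi (1 : ℝ) ⊆ Ioi 0 := Ioi_subset_Ioi zero_le_one
  rw [← Ioc_union_Ioi_eq_Ioi zero_le_one]
  refine (integrableOn_Ioc_div_rpow_of_abs_le hf hp hC).union ?_
  refine Integrable.mono' ((integrableOn_Ioi_rpow_of_lt hq one_pos).const_mul D)
    (((continuousOn_div_rpow hf).mono h1).aestronglyMeasurable measurableSet_Ioi) ?_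
  exact (ae_restrict_iff' measurableSet_Ioi).2
    (ae_of_all _ fun z hz => abs_div_rpow_le (h1 hz) (hD z (h1 hz)))

lemma tendsto_div_rpow_nhdsGT_zero (hp : s < p) (hC : ∀ z > 0, |f z| ≤ C * z ^ p) :
    Tendsto (fun z => f z / z ^ s) (𝓝[>] 0) (𝓝 0) := by
  have hlim : Tendsto (fun z : ℝ => C * z ^ (p - s)) (𝓝[>] 0) (𝓝 0) := by
    simpa [Real.zero_rpow (sub_pos.2 hp).ne'] using
      ((Real.continuousAt_rpow_const 0 (p - s) (Or.inr (sub_pos.2 hp).le)).tendsto.const_mul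
        C).mono_left nhdsWithin_le_nhds
  refine squeeze_zero_norm' ?_ hlim
  filter_upwards [self_mem_nhdsWithin] with z hz using abs_div_rpow_le hz (hC z hz)

lemma tendsto_div_rpow_atTop (hq : q < s) (hD : ∀ z > 0, |f z| ≤ D * z ^ q) :
    Tendsto (fun z => f z / z ^ s) atTop (𝓝 0) := by
  have hlim : Tendsto (fun z : ℝ => D * z ^ (q - s)) atTop (𝓝 0) := by
    simpa [neg_sub] using (tendsto_rpow_neg_atTop (sub_pos.2 hq)).const_mul D
  refine squeeze_zero_norm' ?_ hlim
  filter_upwards [eventually_gt_atTop 0] with z hz using abs_div_rpow_le hz (hD z hz)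

end RpowBounds

section IntegrationByParts

variable {f f' : ℝ → ℝ} {s : ℝ}

lemma hasDerivAt_div_rpow {z : ℝ} (hz : 0 < z) (hf : HasDerivAt f (f' z) z) :
    HasDerivAt (fun t => f t / t ^ s) (f' z / z ^ s - s * (f z / z ^ (s + 1))) z := by
  have hprod := hf.mul (Real.hasDerivAt_rpow_const (p := -s) (Or.inl hz.ne'))
  have hinv : ∀ t : ℝ, 0 < t → t ^ (-s) = (t ^ s)⁻¹ := fun t ht => Real.rpow_neg ht.le s
  refine (hprod.congr_of_eventuallyEq ?_).congr_deriv ?_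
  · filter_upwards [lt_mem_nhds hz] with t ht
    rw [Pi.mul_apply, hinv t ht, div_eq_mul_inv]
  · rw [hinv z hz, show -s - 1 = -(s + 1) by ring, Real.rpow_neg hz.le]
    ring

lemma integral_deriv_div_rpow_eq {R : ℝ} (hR : 0 < R)
    (hf : ∀ z > 0, HasDerivAt f (f' z) z)
    (hf' : IntegrableOn (fun z => f' z / z ^ s) (Ioc 0 R))
    (hfs : IntegrableOn (fun z => f z / z ^ (s + 1)) (Ioc 0 R))
    (h0 : Tendsto (fun z => f z / z ^ s) (𝓝[>] 0) (𝓝 0)) :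
    ∫ z in 0..R, f' z / z ^ s = f R / R ^ s + s * ∫ z in 0..R, f z / z ^ (s + 1) := by
  have hint' := (intervalIntegrable_iff_integrableOn_Ioc_of_le hR.le).2 hf'
  have hints := (intervalIntegrable_iff_integrableOn_Ioc_of_le hR.le).2 hfs
  have hftc := intervalIntegral.integral_eq_sub_of_hasDerivAt_of_tendsto hR
    (fun z hz => hasDerivAt_div_rpow hz.1 (hf z hz.1)) (hint'.sub (hints.const_mul s)) h0
    ((hasDerivAt_div_rpow hR (hf R hR)).continuousAt.tendsto.mono_left nhdsWithin_le_nhds)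
  rw [intervalIntegral.integral_sub hint' (hints.const_mul s),
    intervalIntegral.integral_const_mul] at hftc
  linarith

lemma tendsto_integral_deriv_div_rpow (hf : ∀ z > 0, HasDerivAt f (f' z) z)
    (hf' : ∀ R > 0, IntegrableOn (fun z => f' z / z ^ s) (Ioc 0 R))
    (hfs : IntegrableOn (fun z => f z / z ^ (s + 1)) (Ioi 0))
    (h0 : Tendsto (fun z => f z / z ^ s) (𝓝[>] 0) (𝓝 0))
    (htop : Tendsto (fun z => f z / z ^ s) atTop (𝓝 0)) :
    Tendsto (fun R => ∫ z in 0..R, f' z / z ^ s) atTop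
      (𝓝 (s * ∫ z in Ioi 0, f z / z ^ (s + 1))) := by
  have hlim := htop.add ((intervalIntegral_tendsto_integral_Ioi 0 hfs tendsto_id).const_mul s)
  rw [zero_add] at hlim
  refine hlim.congr' ?_
  filter_upwards [eventually_gt_atTop 0] with R hR
  exact (integral_deriv_div_rpow_eq hR hf (hf' R hR) (hfs.mono_set Ioc_subset_Ioi_self) h0).symm

end IntegrationByParts

lemma abs_le_mul_of_hasDerivAt {f f' : ℝ → ℝ} {K z : ℝ} (hz : 0 ≤ z)
    (hf : ∀ t, HasDerivAt f (f' t) t) (h0 : f 0 = 0) (hK : ∀ t ∈ Icc 0 z, |f' t| ≤ K) :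
    |f z| ≤ K * z := by
  simpa [h0] using norm_image_sub_le_of_norm_deriv_le_segment'
    (fun t _ => (hf t).hasDerivWithinAt) (fun t ht => hK t (Ico_subset_Icc_self ht)) z
    ⟨hz, le_rfl⟩

lemma Real.Gamma_one_sub_eq_mul_Gamma_neg_one_sub {α : ℝ} (h0 : α ≠ 0) (h1 : α ≠ -1) :
    Real.Gamma (1 - α) = α * (1 + α) * Real.Gamma (-1 - α) := by
  have e1 := Real.Gamma_add_one (neg_ne_zero.2 h0)
  have e2 := Real.Gamma_add_one (s := -1 - α) (by contrapose! h1; linarith)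
  rw [show -α + 1 = 1 - α by ring] at e1
  rw [show -1 - α + 1 = -α by ring] at e2
  rw [e1, e2]
  ring

theorem tendsto_integral_Ioc_deriv_deriv_div_rpow {G v w : ℝ → ℝ} {α C D : ℝ}
    (hα : α ∈ Ioo 0 1) (hG : ∀ z, HasDerivAt G (v z) z) (hv : ∀ z, HasDerivAt v (w z) z)
    (hw : Continuous w) (hG0 : G 0 = 0) (hv0 : v 0 = 0)
    (hwC : ∀ z, |w z| ≤ C) (hvD : ∀ z, |v z| ≤ D) :
    Tendsto (fun R => ∫ z in Ioc 0 R, w z / z ^ α) atTop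
      (𝓝 (α * (1 + α) * ∫ z in Ioi 0, G z / z ^ (2 + α))) := by
  obtain ⟨hα0, hα1⟩ := hα
  have hC : 0 ≤ C := (abs_nonneg _).trans (hwC 0)
  have hv_lin : ∀ z ≥ 0, |v z| ≤ C * z := fun z hz =>
    abs_le_mul_of_hasDerivAt hz hv hv0 fun t _ => hwC t
  have hw_le : ∀ z > 0, |w z| ≤ C * z ^ (0 : ℝ) := fun z _ => by simpa using hwC z
  have hv_le_one : ∀ z > 0, |v z| ≤ C * z ^ (1 : ℝ) := fun z hz => by
    simpa using hv_lin z hz.le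
  have hv_le_zero : ∀ z > 0, |v z| ≤ D * z ^ (0 : ℝ) := fun z _ => by simpa using hvD z
  have hG_le_two : ∀ z > 0, |G z| ≤ C * z ^ (2 : ℝ) := fun z hz => by
    have := abs_le_mul_of_hasDerivAt hz.le hG hG0 fun t ht =>
      (hv_lin t ht.1).trans (mul_le_mul_of_nonneg_left ht.2 hC)
    rwa [Real.rpow_two, sq, ← mul_assoc]
  have hG_le_one : ∀ z > 0, |G z| ≤ D * z ^ (1 : ℝ) := fun z hz => by
    simpa using abs_le_mul_of_hasDerivAt hz.le hG hG0 fun t _ => hvD t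
  have hv_cont : Continuous v := continuous_iff_continuousAt.2 fun z => (hv z).continuousAt
  have hG_cont : Continuous G := continuous_iff_continuousAt.2 fun z => (hG z).continuousAt
  have hv_int : IntegrableOn (fun z => v z / z ^ (α + 1)) (Ioi 0) :=
    integrableOn_Ioi_div_rpow_of_abs_le hv_cont.continuousOn (by linarith) (by linarith)
      hv_le_one hv_le_zero
  have hG_int : IntegrableOn (fun z => G z / z ^ (α + 1 + 1)) (Ioi 0) :=
    integrableOn_Ioi_div_rpow_of_abs_le hG_cont.continuousOn (by linarith) (by linarith)
      hG_le_two hG_le_one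
  have hGv :
      ∫ z in Ioi 0, v z / z ^ (α + 1) = (α + 1) * ∫ z in Ioi 0, G z / z ^ (α + 1 + 1) :=
    tendsto_nhds_unique (intervalIntegral_tendsto_integral_Ioi 0 hv_int tendsto_id)
      (tendsto_integral_deriv_div_rpow (fun z _ => hG z)
        (fun _ _ => hv_int.mono_set Ioc_subset_Ioi_self) hG_int
        (tendsto_div_rpow_nhdsGT_zero (by linarith) hG_le_two)
        (tendsto_div_rpow_atTop (by linarith) hG_le_one))
  have hlim := tendsto_integral_deriv_div_rpow (fun z _ => hv z)
    (fun _ _ => integrableOn_Ioc_div_rpow_of_abs_le hw.continuousOn (by linarith) hw_le) hv_int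
    (tendsto_div_rpow_nhdsGT_zero (by linarith) hv_le_one)
    (tendsto_div_rpow_atTop (by linarith) hv_le_zero)
  rw [hGv, show α + 1 + 1 = 2 + α by ring, ← mul_assoc, add_comm α 1] at hlim
  refine hlim.congr' ?_
  filter_upwards [eventually_ge_atTop 0] with R hR
  exact intervalIntegral.integral_of_le hR

theorem xbarDax_repr_general
    (α : ℝ) (hα : α ∈ Set.Ioo (0:ℝ) 1)
    (u : ℝ → ℝ) (hu : ContDiff ℝ 2 u)
    (hub' : ∃ M, ∀ y, |deriv u y| ≤ M)
    (hub'' : ∃ M, ∀ y, |deriv (deriv u) y| ≤ M)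
    (x : ℝ) :
    Tendsto
      (fun R : ℝ => (1 / Real.Gamma (1 - α)) *
        ∫ z in Ioc (0:ℝ) R, deriv (deriv u) (x + z) / z ^ α)
      atTop
      (𝓝 ((1 / Real.Gamma (-1 - α)) *
        ∫ z in Ioi (0:ℝ), (u (x + z) - u x - deriv u x * z) / z ^ (2 + α))) := by
  obtain ⟨M₁, hM₁⟩ := hub'
  obtain ⟨M₂, hM₂⟩ := hub''
  obtain ⟨hu_diff, -, hu'⟩ := contDiff_succ_iff_deriv.mp (show ContDiff ℝ (1 + 1) u from hu)
  obtain ⟨hu'_diff, -, hu''⟩ :=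
    contDiff_succ_iff_deriv.mp (show ContDiff ℝ (0 + 1) (deriv u) from hu')
  have hlim := tendsto_integral_Ioc_deriv_deriv_div_rpow
    (G := fun z => u (x + z) - u x - deriv u x * z) (v := fun z => deriv u (x + z) - deriv u x)
    (w := fun z => deriv (deriv u) (x + z)) hα
    (fun z => (((hu_diff (x + z)).hasDerivAt.comp_const_add x z).sub_const _).sub
      ((hasDerivAt_id z).const_mul _) |>.congr_deriv (by simp))
    (fun z => ((hu'_diff (x + z)).hasDerivAt.comp_const_add x z).sub_const _)
    (hu''.continuous.comp (continuous_const_add x)) (by simp) (by simp)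
    (fun z => hM₂ (x + z)) (fun z => (abs_sub _ _).trans (add_le_add (hM₁ _) (hM₁ x)))
  have hΓ := Real.Gamma_one_sub_eq_mul_Gamma_neg_one_sub hα.1.ne' (by linarith [hα.1])
  convert hlim.const_mul (1 / Real.Gamma (1 - α)) using 2
  have hα' : α * (1 + α) ≠ 0 := by nlinarith [hα.1]
  rw [hΓ, mul_comm (α * (1 + α)), one_div, one_div, mul_inv, mul_assoc,
    inv_mul_cancel_left₀ hα']

/-- For `α ∈ (0,1)`, `u : ℝ → ℝ` C² with `u`, `u'`, `u''` bounded, and `x ∈ ℝ`,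
`(1/Γ(−1−α)) ∫_{0}^{∞} (u(x+z) − u(x) − u'(x)·z)/z^{2+α} dz
  = (1/Γ(1−α)) · lim_{R→∞} ∫_{0}^{R} u''(x+z)/z^{α} dz`,
the improper integral on the right converging to the stated value. -/
theorem xbarDax_repr
    (α : ℝ) (hα : α ∈ Set.Ioo (0:ℝ) 1)
    (u : ℝ → ℝ) (hu : ContDiff ℝ 2 u)
    (hub : ∃ M, ∀ y, |u y| ≤ M)
    (hub' : ∃ M, ∀ y, |deriv u y| ≤ M)
    (hub'' : ∃ M, ∀ y, |deriv (deriv u) y| ≤ M)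
    (x : ℝ) :
    Tendsto
      (fun R : ℝ => (1 / Real.Gamma (1 - α)) *
        ∫ z in Ioc (0:ℝ) R, deriv (deriv u) (x + z) / z ^ α)
      atTop
      (𝓝 ((1 / Real.Gamma (-1 - α)) *
        ∫ z in Ioi (0:ℝ), (u (x + z) - u x - deriv u x * z) / z ^ (2 + α))) :=
  xbarDax_repr_general α hα u hu hub' hub'' x
end

section
/- Let α ∈ (0,2) and let k be a positive integer. Then −(ik·2^{α−1}·Γ((1+α)/2)/(√π·Γ(1−α/2))) ∫_{0}^{∞} z^{−α} · [(−z+i)^k − (z+i)^k]/(1+z²)^{1+k/2} dz = (i^{k}·2^{α}·Γ((1+α)/2)/(√π·Γ(k/2)·Γ(1−α/2))) · ∑_{n=0}^{k} sin(nπ/2) · C(k,n) · Γ((1+α+k−n)/2) · Γ((1−α+n)/2). -/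
/-!
Writing `i - z = i (1 + i z)` and `i + z = i (1 - i z)`, the binomial theorem and
`iⁿ - (-i)ⁿ = 2 i sin (nπ/2)` give
`(i - z)ᵏ - (i + z)ᵏ = 2 iᵏ⁺¹ ∑ₙ C(k,n) sin (nπ/2) zⁿ`.
The term `n = 0` vanishes (it alone would diverge at `0` when `α ≥ 1`), and every other term
is a Mellin-type integral `∫₀^∞ z^(2a-1) (1 + z²)^(-p) dz = Γ(a) Γ(p - a) / (2 Γ(p))`
with `a = (1 - α + n)/2 > 0`, which the substitution `x = z² / (1 + z²)` turns into a Beta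
integral. What is left is the recurrence `k / Γ(1 + k/2) = 2 / Γ(k/2)`.
-/

open MeasureTheory Set

-- Also true at the poles of `Γ`, where `Real.Gamma` takes the junk value `0`.
theorem Real.inv_Gamma_eq_self_mul_inv_Gamma_add_one (s : ℝ) :
    (Real.Gamma s)⁻¹ = s * (Real.Gamma (s + 1))⁻¹ := by
  rcases ne_or_eq s 0 with hs | rfl
  · rw [Real.Gamma_add_one hs, mul_inv, mul_inv_cancel_left₀ hs]
  · rw [zero_add, Real.Gamma_zero, inv_zero, zero_mul]

section Beta

open Complex

variable {a b : ℝ}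

theorem ofReal_rpow_mul_one_sub_rpow {x : ℝ} (hx : x ∈ Ioo 0 1) :
    ((x ^ (a - 1) * (1 - x) ^ (b - 1) : ℝ) : ℂ) =
      (x : ℂ) ^ ((a : ℂ) - 1) * (1 - (x : ℂ)) ^ ((b : ℂ) - 1) := by
  rw [ofReal_mul, ofReal_cpow hx.1.le, ofReal_cpow (sub_nonneg.2 hx.2.le)]
  push_cast
  rfl

theorem integrableOn_rpow_mul_one_sub_rpow (ha : 0 < a) (hb : 0 < b) :
    IntegrableOn (fun x : ℝ => x ^ (a - 1) * (1 - x) ^ (b - 1)) (Ioo 0 1) := by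
  have hC := betaIntegral_convergent (u := a) (v := b) (by simpa using ha) (by simpa using hb)
  rw [intervalIntegrable_iff_integrableOn_Ioo_of_le zero_le_one] at hC
  simpa [IntegrableOn] using (hC.congr_fun (fun x hx => (ofReal_rpow_mul_one_sub_rpow hx).symm)
    measurableSet_Ioo).re

theorem integral_rpow_mul_one_sub_rpow (ha : 0 < a) (hb : 0 < b) :
    ∫ x in Ioo (0 : ℝ) 1, x ^ (a - 1) * (1 - x) ^ (b - 1) =
      Real.Gamma a * Real.Gamma b / Real.Gamma (a + b) := by
  have hB : betaIntegral a b =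
      ((∫ x in Ioo (0 : ℝ) 1, x ^ (a - 1) * (1 - x) ^ (b - 1) : ℝ) : ℂ) := by
    rw [betaIntegral, intervalIntegral.integral_of_le zero_le_one, integral_Ioc_eq_integral_Ioo,
      ← integral_complex_ofReal]
    exact setIntegral_congr_fun measurableSet_Ioo fun x hx =>
      (ofReal_rpow_mul_one_sub_rpow hx).symm
  have hΓ := Gamma_mul_Gamma_eq_betaIntegral (s := a) (t := b) (by simpa using ha)
    (by simpa using hb)
  rw [hB, ← ofReal_add, Gamma_ofReal, Gamma_ofReal, Gamma_ofReal] at hΓ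
  rw [eq_div_iff (Real.Gamma_pos_of_pos (add_pos ha hb)).ne', mul_comm]
  exact_mod_cast hΓ.symm

end Beta

theorem hasDerivAt_sq_div_one_add_sq (z : ℝ) :
    HasDerivAt (fun z : ℝ => z ^ 2 / (1 + z ^ 2)) (2 * z / (1 + z ^ 2) ^ 2) z := by
  have hsq : HasDerivAt (fun z : ℝ => z ^ 2) (2 * z) z := by simpa using hasDerivAt_pow 2 z
  refine (hsq.div (hsq.const_add 1) (by positivity)).congr_deriv ?_
  field_simp
  ring

theorem strictMonoOn_sq_div_one_add_sq :
    StrictMonoOn (fun z : ℝ => z ^ 2 / (1 + z ^ 2)) (Ioi 0) := by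
  intro x hx y hy hxy
  simp only [mem_Ioi] at hx hy
  rw [div_lt_div_iff₀ (by positivity) (by positivity)]
  nlinarith

theorem image_sq_div_one_add_sq_Ioi :
    (fun z : ℝ => z ^ 2 / (1 + z ^ 2)) '' Ioi 0 = Ioo 0 1 := by
  ext x
  constructor
  · rintro ⟨z, hz, rfl⟩
    have hz : 0 < z := hz
    exact ⟨by positivity, (div_lt_one (by positivity)).2 (by linarith)⟩
  · rintro ⟨hx0, hx1⟩
    have h1x : 0 < 1 - x := by linarith
    refine ⟨Real.sqrt (x / (1 - x)), Real.sqrt_pos.2 (div_pos hx0 h1x), ?_⟩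
    simp only [Real.sq_sqrt (div_pos hx0 h1x).le]
    field_simp
    ring

theorem abs_deriv_mul_rpow_mul_one_sub_rpow_comp {a p z : ℝ} (hz : 0 < z) :
    |2 * z / (1 + z ^ 2) ^ 2| *
        ((z ^ 2 / (1 + z ^ 2)) ^ (a - 1) * (1 - z ^ 2 / (1 + z ^ 2)) ^ (p - a - 1)) =
      2 * (z ^ (2 * a - 1) * (1 + z ^ 2) ^ (-p)) := by
  set w := 1 + z ^ 2
  have hw0 : 0 < w := by positivity
  have hsub : 1 - z ^ 2 / w = w⁻¹ := by field_simp; ring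
  have hz2 : (z ^ 2) ^ (a - 1) = z ^ (2 * a - 2) := by
    rw [← Real.rpow_natCast, ← Real.rpow_mul hz.le]; ring_nf
  have hz1 : z ^ (2 * a - 1) = z * z ^ (2 * a - 2) := by
    rw [show 2 * a - 1 = 1 + (2 * a - 2) by ring, Real.rpow_add hz, Real.rpow_one]
  have hwp : w ^ (-p) = (w ^ 2 * w ^ (a - 1) * w ^ (p - a - 1))⁻¹ := by
    rw [← Real.rpow_natCast, ← Real.rpow_add hw0, ← Real.rpow_add hw0,
      ← Real.rpow_neg hw0.le]
    ring_nf
  rw [abs_of_pos (by positivity), hsub, Real.div_rpow (by positivity) hw0.le, hz2,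
    Real.inv_rpow hw0.le, hz1, hwp]
  field_simp

section Mellin

variable {a p : ℝ}

theorem integrableOn_rpow_mul_one_add_sq_rpow (ha : 0 < a) (hap : a < p) :
    IntegrableOn (fun z : ℝ => z ^ (2 * a - 1) * (1 + z ^ 2) ^ (-p)) (Ioi 0) := by
  have h := (integrableOn_image_iff_integrableOn_abs_deriv_smul measurableSet_Ioi
    (fun z _ => (hasDerivAt_sq_div_one_add_sq z).hasDerivWithinAt)
    strictMonoOn_sq_div_one_add_sq.injOn _).1
    (image_sq_div_one_add_sq_Ioi ▸ integrableOn_rpow_mul_one_sub_rpow ha (sub_pos.2 hap))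
  exact (integrable_const_mul_iff (IsUnit.mk0 (2 : ℝ) two_ne_zero) _).1
    (h.congr_fun (fun z hz => abs_deriv_mul_rpow_mul_one_sub_rpow_comp hz) measurableSet_Ioi)

theorem integral_rpow_mul_one_add_sq_rpow (ha : 0 < a) (hap : a < p) :
    ∫ z in Ioi (0 : ℝ), z ^ (2 * a - 1) * (1 + z ^ 2) ^ (-p) =
      Real.Gamma a * Real.Gamma (p - a) / (2 * Real.Gamma p) := by
  have h := integral_image_eq_integral_abs_deriv_smul measurableSet_Ioi
    (fun z _ => (hasDerivAt_sq_div_one_add_sq z).hasDerivWithinAt)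
    strictMonoOn_sq_div_one_add_sq.injOn (fun x => x ^ (a - 1) * (1 - x) ^ (p - a - 1))
  rw [image_sq_div_one_add_sq_Ioi, integral_rpow_mul_one_sub_rpow ha (sub_pos.2 hap),
    add_sub_cancel, setIntegral_congr_fun measurableSet_Ioi fun z hz => (smul_eq_mul _ _).trans
      (abs_deriv_mul_rpow_mul_one_sub_rpow_comp hz), integral_const_mul] at h
  rw [div_mul_eq_div_div_swap, h, mul_div_cancel_left₀ _ two_ne_zero]

end Mellin

section Binomial

open Complex
open scoped Real

theorem I_pow_sub_neg_I_pow (m : ℕ) : I ^ m - (-I) ^ m = 2 * I * Real.sin (m * π / 2) := by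
  have hpos : exp ((m * π / 2 : ℝ) * I) = I ^ m := by
    conv_rhs => rw [← exp_pi_div_two_mul_I, ← exp_nat_mul]
    push_cast; ring_nf
  have hneg : exp (-(m * π / 2 : ℝ) * I) = (-I) ^ m := by
    conv_rhs => rw [← inv_I, ← exp_pi_div_two_mul_I, ← exp_neg, ← exp_nat_mul]
    push_cast; ring_nf
  rw [ofReal_sin, sin, hpos, hneg]
  ring_nf
  rw [I_sq]; ring

theorem neg_add_I_pow_sub_add_I_pow (z : ℂ) (k : ℕ) :
    (-z + I) ^ k - (z + I) ^ k =
      2 * I ^ (k + 1) * ∑ m ∈ Finset.range (k + 1),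
        k.choose m * Real.sin (m * π / 2) * z ^ m := by
  have hminus : -z + I = I * (I * z + 1) := by ring_nf; rw [I_sq]; ring
  have hplus : z + I = I * (-I * z + 1) := by ring_nf; rw [I_sq]; ring
  rw [hminus, hplus, mul_pow, mul_pow, ← mul_sub, add_pow, add_pow, ← Finset.sum_sub_distrib,
    Finset.mul_sum, Finset.mul_sum]
  refine Finset.sum_congr rfl fun m _ => ?_
  linear_combination (I ^ k * k.choose m * z ^ m) * I_pow_sub_neg_I_pow m

theorem rpow_mul_neg_add_I_pow_sub_add_I_pow_div_eq_sum (α p : ℝ) (k : ℕ) {z : ℝ}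
    (hz : 0 < z) :
    ((z ^ (-α) : ℝ) : ℂ) * ((-(z : ℂ) + I) ^ k - ((z : ℂ) + I) ^ k) /
        ((1 + z ^ 2) ^ p : ℝ) =
      ∑ m ∈ Finset.range (k + 1), 2 * I ^ (k + 1) * k.choose m * Real.sin (m * π / 2) *
        ((z ^ ((m : ℝ) - α) * (1 + z ^ 2) ^ (-p) : ℝ) : ℂ) := by
  rw [neg_add_I_pow_sub_add_I_pow, Finset.mul_sum, Finset.mul_sum, Finset.sum_div]
  refine Finset.sum_congr rfl fun m _ => ?_
  rw [sub_eq_neg_add, Real.rpow_add hz, Real.rpow_natCast,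
    Real.rpow_neg (by positivity : (0 : ℝ) ≤ 1 + z ^ 2)]
  push_cast
  ring

theorem integral_rpow_mul_neg_add_I_pow_sub_add_I_pow_div {α p : ℝ} (k : ℕ) (hα : α < 2)
    (hp : (1 - α + k) / 2 < p) :
    ∫ z in Ioi (0 : ℝ),
        ((z ^ (-α) : ℝ) : ℂ) * ((-(z : ℂ) + I) ^ k - ((z : ℂ) + I) ^ k) /
          ((1 + z ^ 2) ^ p : ℝ) =
      ∑ m ∈ Finset.range (k + 1), 2 * I ^ (k + 1) * k.choose m * Real.sin (m * π / 2) *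
        ((Real.Gamma ((1 - α + m) / 2) * Real.Gamma (p - (1 - α + m) / 2) / (2 * Real.Gamma p) :
          ℝ) : ℂ) := by
  have hexp : ∀ m : ℕ, (m : ℝ) - α = 2 * ((1 - α + m) / 2) - 1 := fun m => by ring
  have hbounds : ∀ m ∈ Finset.range (k + 1), 0 < m →
      0 < (1 - α + m) / 2 ∧ (1 - α + m) / 2 < p := by
    intro m hm hm0
    have hmk : (m : ℝ) ≤ k := by exact_mod_cast Finset.mem_range_succ_iff.1 hm
    have hm1 : (1 : ℝ) ≤ m := by exact_mod_cast hm0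
    constructor <;> linarith
  have hint : ∀ m ∈ Finset.range (k + 1), IntegrableOn (fun z : ℝ =>
      2 * I ^ (k + 1) * k.choose m * Real.sin (m * π / 2) *
        ((z ^ ((m : ℝ) - α) * (1 + z ^ 2) ^ (-p) : ℝ) : ℂ)) (Ioi 0) := by
    intro m hm
    rcases m.eq_zero_or_pos with rfl | hm0
    · simp
    rw [hexp m]
    exact (integrableOn_rpow_mul_one_add_sq_rpow (hbounds m hm hm0).1
      (hbounds m hm hm0).2).ofReal.const_mul _
  rw [setIntegral_congr_fun measurableSet_Ioi fun z hz =>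
      rpow_mul_neg_add_I_pow_sub_add_I_pow_div_eq_sum α p k hz, integral_finsetSum _ hint]
  refine Finset.sum_congr rfl fun m hm => ?_
  rcases m.eq_zero_or_pos with rfl | hm0
  · simp
  rw [integral_const_mul, integral_complex_ofReal, hexp m,
    integral_rpow_mul_one_add_sq_rpow (hbounds m hm hm0).1 (hbounds m hm hm0).2]

end Binomial

theorem fracLap_phik_at_zero_general
    (α : ℝ) (hα : α ∈ Set.Ioo (0:ℝ) 2) (k : ℕ) :
    -(Complex.I * (k : ℂ) * Complex.ofReal ((2:ℝ) ^ (α - 1)) *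
          Complex.ofReal (Real.Gamma ((1 + α) / 2)) /
          (Complex.ofReal (Real.sqrt Real.pi) * Complex.ofReal (Real.Gamma (1 - α / 2)))) *
        (∫ z in Ioi (0:ℝ),
          Complex.ofReal (z ^ (-α)) * ((-(z : ℂ) + Complex.I) ^ k - ((z : ℂ) + Complex.I) ^ k) /
            Complex.ofReal ((1 + z ^ 2) ^ (1 + (k : ℝ) / 2)))
      = (Complex.I ^ k * Complex.ofReal ((2:ℝ) ^ α) *
            Complex.ofReal (Real.Gamma ((1 + α) / 2)) /
            (Complex.ofReal (Real.sqrt Real.pi) * Complex.ofReal (Real.Gamma ((k : ℝ) / 2)) *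
              Complex.ofReal (Real.Gamma (1 - α / 2)))) *
          ∑ n ∈ Finset.range (k + 1),
            Complex.ofReal (Real.sin ((n : ℝ) * Real.pi / 2)) * (k.choose n : ℂ) *
              Complex.ofReal (Real.Gamma ((1 + α + (k : ℝ) - (n : ℝ)) / 2)) *
              Complex.ofReal (Real.Gamma ((1 - α + (n : ℝ)) / 2)) := by
  obtain ⟨hα0, hα2⟩ := hα
  rw [integral_rpow_mul_neg_add_I_pow_sub_add_I_pow_div k hα2 (by linarith), Finset.mul_sum,
    Finset.mul_sum]
  refine Finset.sum_congr rfl fun m _ => ?_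
  have hΓ : ((Real.Gamma (k / 2) : ℝ) : ℂ)⁻¹ =
      (k / 2 : ℂ) * ((Real.Gamma (1 + k / 2) : ℝ) : ℂ)⁻¹ := by
    have h := congrArg Complex.ofReal (Real.inv_Gamma_eq_self_mul_inv_Gamma_add_one (k / 2))
    push_cast [add_comm] at h
    exact h
  have h2 : (((2 : ℝ) ^ α : ℝ) : ℂ) = 2 * (((2 : ℝ) ^ (α - 1) : ℝ) : ℂ) := by
    rw [Real.rpow_sub_one two_ne_zero]
    push_cast
    ring
  rw [h2, show 1 + (k : ℝ) / 2 - (1 - α + m) / 2 = (1 + α + k - m) / 2 by ring,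
    Complex.ofReal_div, Complex.ofReal_mul, Complex.ofReal_mul, Complex.ofReal_ofNat]
  set X := Complex.I ^ k * (((2 : ℝ) ^ (α - 1) : ℝ) : ℂ) * Real.Gamma ((1 + α) / 2) *
    k.choose m * Real.sin (m * Real.pi / 2) * Real.Gamma ((1 - α + m) / 2) *
    Real.Gamma ((1 + α + k - m) / 2) / (Real.sqrt Real.pi * Real.Gamma (1 - α / 2))
  linear_combination
    (-(X * k * ((Real.Gamma (1 + k / 2) : ℝ) : ℂ)⁻¹)) * Complex.I_sq - 2 * X * hΓ

/-- For `α ∈ (0,2)` and `k` a positive integer,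
`−(ik·2^{α−1}·Γ((1+α)/2)/(√π·Γ(1−α/2))) ∫_{0}^{∞} z^{−α}·[(−z+i)^k − (z+i)^k]/(1+z²)^{1+k/2} dz
  = (i^k·2^α·Γ((1+α)/2)/(√π·Γ(k/2)·Γ(1−α/2))) ·
      ∑_{n=0}^{k} sin(nπ/2)·C(k,n)·Γ((1+α+k−n)/2)·Γ((1−α+n)/2)`. -/
theorem fracLap_phik_at_zero
    (α : ℝ) (hα : α ∈ Set.Ioo (0:ℝ) 2) (k : ℕ) (hk : 0 < k) :
    -(Complex.I * (k : ℂ) * Complex.ofReal ((2:ℝ) ^ (α - 1)) *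
          Complex.ofReal (Real.Gamma ((1 + α) / 2)) /
          (Complex.ofReal (Real.sqrt Real.pi) * Complex.ofReal (Real.Gamma (1 - α / 2)))) *
        (∫ z in Ioi (0:ℝ),
          Complex.ofReal (z ^ (-α)) * ((-(z : ℂ) + Complex.I) ^ k - ((z : ℂ) + Complex.I) ^ k) /
            Complex.ofReal ((1 + z ^ 2) ^ (1 + (k : ℝ) / 2)))
      = (Complex.I ^ k * Complex.ofReal ((2:ℝ) ^ α) *
            Complex.ofReal (Real.Gamma ((1 + α) / 2)) /
            (Complex.ofReal (Real.sqrt Real.pi) * Complex.ofReal (Real.Gamma ((k : ℝ) / 2)) *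
              Complex.ofReal (Real.Gamma (1 - α / 2)))) *
          ∑ n ∈ Finset.range (k + 1),
            Complex.ofReal (Real.sin ((n : ℝ) * Real.pi / 2)) * (k.choose n : ℂ) *
              Complex.ofReal (Real.Gamma ((1 + α + (k : ℝ) - (n : ℝ)) / 2)) *
              Complex.ofReal (Real.Gamma ((1 - α + (n : ℝ)) / 2)) :=
  fracLap_phik_at_zero_general α hα k
end
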